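/- arXiv:0905.4919 — 3 statements merged into one kernel-verified Lean document; each statement's English description precedes it below -/
import Mathlib

section
/- A doubly twisted product M₁ ×_{(λ₁,λ₂)} M₂ is (up to replacing g₁, g₂ by conformal metrics) a doubly warped product if and only if both mean curvature vector fields N₁ = P₂(−∇ln λ₁) and N₂ = P₁(−∇ln λ₂) are closed vector fields (i.e. their metrically equivalent one-forms are closed). Equivalently, N₁ and N₂ are closed if and only if λ₁ and λ₂ factor as λ₁(x,y) = f₁(x)h₁(y) and λ₂(x,y) = f₂(x)h₂(y) for smooth functions fᵢ on M₁ and hᵢ on M₂. -/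
open ContinuousLinearMap

section
variable {E₁ E₂ : Type*} [NormedAddCommGroup E₁] [NormedSpace ℝ E₁]
    [NormedAddCommGroup E₂] [NormedSpace ℝ E₂]

-- smoothness of q ↦ fderiv F q w
lemma aux_smooth_eval (F : E₁ × E₂ → ℝ) (hF : ContDiff ℝ (⊤ : ℕ∞) F) (w : E₁ × E₂) :
    ContDiff ℝ (⊤ : ℕ∞) (fun q => fderiv ℝ F q w) :=
  (ContinuousLinearMap.apply ℝ ℝ w).contDiff.comp (hF.fderiv_right (by simp))

-- Key1 : the inner derivative is constant in the first variable
lemma aux_key1 (F : E₁ × E₂ → ℝ) (hF : ContDiff ℝ (⊤ : ℕ∞) F)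
    (hmix : ∀ (p : E₁ × E₂) (u : E₁) (v : E₂),
      fderiv ℝ (fun q => fderiv ℝ F q (0, v)) p (u, 0) = 0)
    (x : E₁) (y : E₂) (v : E₂) :
    fderiv ℝ F (x, y) (0, v) = fderiv ℝ F (0, y) (0, v) := by
  set Φ : E₁ × E₂ → ℝ := fun q => fderiv ℝ F q (0, v) with hΦ
  have hΦs : ContDiff ℝ (⊤ : ℕ∞) Φ := aux_smooth_eval F hF (0, v)
  have hincl : ∀ x : E₁, HasFDerivAt (fun x : E₁ => ((x, y) : E₁ × E₂))
      ((ContinuousLinearMap.id ℝ E₁).prod 0) x := fun x =>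
    (hasFDerivAt_id x).prodMk (hasFDerivAt_const y x)
  have hψ : ∀ x : E₁, HasFDerivAt (fun x : E₁ => Φ (x, y))
      ((fderiv ℝ Φ (x, y)).comp ((ContinuousLinearMap.id ℝ E₁).prod 0)) x := fun x => by
    have := ((hΦs.differentiable (by simp) (x, y)).hasFDerivAt).comp x (hincl x); exact this
  have hzero : ∀ x : E₁, fderiv ℝ (fun x : E₁ => Φ (x, y)) x = 0 := by
    intro x
    rw [(hψ x).fderiv]
    ext u
    simpa using hmix (x, y) u v
  have := is_const_of_fderiv_eq_zero (fun x => (hψ x).differentiableAt) hzero x 0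
  simpa using this
end

section
variable {E₁ E₂ : Type*} [NormedAddCommGroup E₁] [NormedSpace ℝ E₁]
    [NormedAddCommGroup E₂] [NormedSpace ℝ E₂]

lemma aux_factor (lam : E₁ × E₂ → ℝ) (hsm : ContDiff ℝ (⊤ : ℕ∞) lam) (hpos : ∀ q, 0 < lam q)
    (hmix : ∀ (p : E₁ × E₂) (u : E₁) (v : E₂),
      fderiv ℝ (fun q => fderiv ℝ (fun r => Real.log (lam r)) q (0, v)) p (u, 0) = 0) :
    ∃ (f : E₁ → ℝ) (h : E₂ → ℝ), ContDiff ℝ (⊤ : ℕ∞) f ∧ ContDiff ℝ (⊤ : ℕ∞) h ∧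
      (∀ x, 0 < f x) ∧ (∀ y, 0 < h y) ∧ ∀ x y, lam (x, y) = f x * h y := by
  set F : E₁ × E₂ → ℝ := fun q => Real.log (lam q) with hFdef
  have hF : ContDiff ℝ (⊤ : ℕ∞) F := hsm.log fun q => (hpos q).ne'
  have key1 : ∀ (x : E₁) (y : E₂) (v : E₂),
      fderiv ℝ F (x, y) (0, v) = fderiv ℝ F (0, y) (0, v) :=
    aux_key1 F hF hmix
  -- additivity of F
  have key2 : ∀ x y, F (x, y) = F (x, 0) - F (0, 0) + F (0, y) := by
    intro x y
    set χ : E₂ → ℝ := fun y => F (x, y) - F (0, y) with hχdef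
    have hincl : ∀ (a : E₁) (y : E₂), HasFDerivAt (fun y : E₂ => ((a, y) : E₁ × E₂))
        ((0 : E₂ →L[ℝ] E₁).prod (ContinuousLinearMap.id ℝ E₂)) y := fun a y =>
      (hasFDerivAt_const a y).prodMk (hasFDerivAt_id y)
    have hslice : ∀ (a : E₁) (y : E₂), HasFDerivAt (fun y : E₂ => F (a, y))
        ((fderiv ℝ F (a, y)).comp ((0 : E₂ →L[ℝ] E₁).prod (ContinuousLinearMap.id ℝ E₂))) y :=
      fun a y => ((hF.differentiable (by simp) (a, y)).hasFDerivAt).comp y (hincl a y)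
    have hχ : ∀ y : E₂, HasFDerivAt χ
        (((fderiv ℝ F (x, y)).comp ((0 : E₂ →L[ℝ] E₁).prod (ContinuousLinearMap.id ℝ E₂))) -
         ((fderiv ℝ F (0, y)).comp ((0 : E₂ →L[ℝ] E₁).prod (ContinuousLinearMap.id ℝ E₂)))) y :=
      fun y => (hslice x y).sub (hslice 0 y)
    have hzero : ∀ y : E₂, fderiv ℝ χ y = 0 := by
      intro y
      rw [(hχ y).fderiv]
      ext v
      simp only [ContinuousLinearMap.sub_apply, ContinuousLinearMap.coe_comp',
        Function.comp_apply, ContinuousLinearMap.prod_apply, ContinuousLinearMap.zero_apply,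
        ContinuousLinearMap.coe_id', id_eq, ContinuousLinearMap.zero_apply, sub_eq_zero]
      exact key1 x y v
    have := is_const_of_fderiv_eq_zero (fun y => (hχ y).differentiableAt) hzero y 0
    have h0 : F (x, y) - F (0, y) = F (x, 0) - F (0, 0) := this
    linarith
  refine ⟨fun x => lam (x, 0) / lam (0, 0), fun y => lam (0, y), ?_, ?_, ?_, ?_, ?_⟩
  · exact (hsm.comp (contDiff_id.prodMk contDiff_const)).div_const _
  · exact hsm.comp (contDiff_const.prodMk contDiff_id)
  · exact fun x => div_pos (hpos _) (hpos _)
  · exact fun y => hpos _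
  · intro x y
    have e1 : lam (x, y) = Real.exp (F (x, y)) := (Real.exp_log (hpos _)).symm
    rw [e1, key2 x y, Real.exp_add, Real.exp_sub, Real.exp_log (hpos _),
      Real.exp_log (hpos _), Real.exp_log (hpos _)]
end

section
variable {E₁ E₂ : Type*} [NormedAddCommGroup E₁] [NormedSpace ℝ E₁]
    [NormedAddCommGroup E₂] [NormedSpace ℝ E₂]

lemma aux_closed (lam : E₁ × E₂ → ℝ) (f : E₁ → ℝ) (h : E₂ → ℝ)
    (hf : ContDiff ℝ (⊤ : ℕ∞) f) (hh : ContDiff ℝ (⊤ : ℕ∞) h)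
    (hfpos : ∀ x, 0 < f x) (hhpos : ∀ y, 0 < h y)
    (heq : ∀ x y, lam (x, y) = f x * h y)
    (p : E₁ × E₂) (u : E₁) (v : E₂) :
    fderiv ℝ (fun q => fderiv ℝ (fun r => Real.log (lam r)) q (0, v)) p (u, 0) = 0 := by
  have hlf : ContDiff ℝ (⊤ : ℕ∞) (fun x => Real.log (f x)) := hf.log fun x => (hfpos x).ne'
  have hlh : ContDiff ℝ (⊤ : ℕ∞) (fun y => Real.log (h y)) := hh.log fun y => (hhpos y).ne'
  have hFeq : (fun r : E₁ × E₂ => Real.log (lam r)) =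
      fun r : E₁ × E₂ => Real.log (f r.1) + Real.log (h r.2) := by
    funext r
    rw [show lam r = f r.1 * h r.2 from heq r.1 r.2,
      Real.log_mul (hfpos _).ne' (hhpos _).ne']
  -- the inner one-form only depends on the second variable
  have hinner : ∀ q : E₁ × E₂,
      fderiv ℝ (fun r : E₁ × E₂ => Real.log (lam r)) q (0, v) =
      fderiv ℝ (fun y => Real.log (h y)) q.2 v := by
    intro q
    rw [hFeq]
    have h1 : HasFDerivAt (fun r : E₁ × E₂ => Real.log (f r.1))
        ((fderiv ℝ (fun x => Real.log (f x)) q.1).comp (ContinuousLinearMap.fst ℝ E₁ E₂)) q :=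
      ((hlf.differentiable (by simp) q.1).hasFDerivAt).comp q (hasFDerivAt_fst)
    have h2 : HasFDerivAt (fun r : E₁ × E₂ => Real.log (h r.2))
        ((fderiv ℝ (fun y => Real.log (h y)) q.2).comp (ContinuousLinearMap.snd ℝ E₁ E₂)) q :=
      ((hlh.differentiable (by simp) q.2).hasFDerivAt).comp q (hasFDerivAt_snd)
    rw [(h1.fun_add h2).fderiv]
    simp
  have hrw : (fun q : E₁ × E₂ => fderiv ℝ (fun r : E₁ × E₂ => Real.log (lam r)) q (0, v)) =
      (fun y : E₂ => fderiv ℝ (fun y => Real.log (h y)) y v) ∘ Prod.snd := by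
    funext q; exact hinner q
  rw [hrw]
  have hG : Differentiable ℝ (fun y : E₂ => fderiv ℝ (fun y => Real.log (h y)) y v) :=
    ((ContinuousLinearMap.apply ℝ ℝ v).contDiff.comp (hlh.fderiv_right (m := (⊤ : ℕ∞)) (by simp))).differentiable
      (by simp)
  rw [fderiv_comp p (hG p.2) (differentiable_snd p)]
  simp [fderiv_snd]
end

section
variable {E₁ E₂ : Type*} [NormedAddCommGroup E₁] [NormedSpace ℝ E₁]
    [NormedAddCommGroup E₂] [NormedSpace ℝ E₂]

lemma aux_key1' (F : E₁ × E₂ → ℝ) (hF : ContDiff ℝ (⊤ : ℕ∞) F)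
    (hmix : ∀ (p : E₁ × E₂) (u : E₁) (v : E₂),
      fderiv ℝ (fun q => fderiv ℝ F q (u, 0)) p (0, v) = 0)
    (x : E₁) (y : E₂) (u : E₁) :
    fderiv ℝ F (x, y) (u, 0) = fderiv ℝ F (x, 0) (u, 0) := by
  set Φ : E₁ × E₂ → ℝ := fun q => fderiv ℝ F q (u, 0) with hΦ
  have hΦs : ContDiff ℝ (⊤ : ℕ∞) Φ := aux_smooth_eval F hF (u, 0)
  have hincl : ∀ y : E₂, HasFDerivAt (fun y : E₂ => ((x, y) : E₁ × E₂))
      ((0 : E₂ →L[ℝ] E₁).prod (ContinuousLinearMap.id ℝ E₂)) y := fun y =>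
    (hasFDerivAt_const x y).prodMk (hasFDerivAt_id y)
  have hψ : ∀ y : E₂, HasFDerivAt (fun y : E₂ => Φ (x, y))
      ((fderiv ℝ Φ (x, y)).comp ((0 : E₂ →L[ℝ] E₁).prod (ContinuousLinearMap.id ℝ E₂))) y :=
    fun y => ((hΦs.differentiable (by simp) (x, y)).hasFDerivAt).comp y (hincl y)
  have hzero : ∀ y : E₂, fderiv ℝ (fun y : E₂ => Φ (x, y)) y = 0 := by
    intro y
    rw [(hψ y).fderiv]
    ext v
    simpa using hmix (x, y) u v
  have := is_const_of_fderiv_eq_zero (fun y => (hψ y).differentiableAt) hzero y 0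
  simpa using this

lemma aux_factor' (lam : E₁ × E₂ → ℝ) (hsm : ContDiff ℝ (⊤ : ℕ∞) lam) (hpos : ∀ q, 0 < lam q)
    (hmix : ∀ (p : E₁ × E₂) (u : E₁) (v : E₂),
      fderiv ℝ (fun q => fderiv ℝ (fun r => Real.log (lam r)) q (u, 0)) p (0, v) = 0) :
    ∃ (f : E₁ → ℝ) (h : E₂ → ℝ), ContDiff ℝ (⊤ : ℕ∞) f ∧ ContDiff ℝ (⊤ : ℕ∞) h ∧
      (∀ x, 0 < f x) ∧ (∀ y, 0 < h y) ∧ ∀ x y, lam (x, y) = f x * h y := by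
  set F : E₁ × E₂ → ℝ := fun q => Real.log (lam q) with hFdef
  have hF : ContDiff ℝ (⊤ : ℕ∞) F := hsm.log fun q => (hpos q).ne'
  have key1 : ∀ (x : E₁) (y : E₂) (u : E₁),
      fderiv ℝ F (x, y) (u, 0) = fderiv ℝ F (x, 0) (u, 0) :=
    aux_key1' F hF hmix
  have key2 : ∀ x y, F (x, y) = F (x, 0) + (F (0, y) - F (0, 0)) := by
    intro x y
    set χ : E₁ → ℝ := fun x => F (x, y) - F (x, 0) with hχdef
    have hincl : ∀ (b : E₂) (x : E₁), HasFDerivAt (fun x : E₁ => ((x, b) : E₁ × E₂))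
        ((ContinuousLinearMap.id ℝ E₁).prod 0) x := fun b x =>
      (hasFDerivAt_id x).prodMk (hasFDerivAt_const b x)
    have hslice : ∀ (b : E₂) (x : E₁), HasFDerivAt (fun x : E₁ => F (x, b))
        ((fderiv ℝ F (x, b)).comp ((ContinuousLinearMap.id ℝ E₁).prod 0)) x :=
      fun b x => by
        have := ((hF.differentiable (by simp) (x, b)).hasFDerivAt).comp x (hincl b x); exact this
    have hχ : ∀ x : E₁, HasFDerivAt χ
        (((fderiv ℝ F (x, y)).comp ((ContinuousLinearMap.id ℝ E₁).prod 0)) -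
         ((fderiv ℝ F (x, 0)).comp ((ContinuousLinearMap.id ℝ E₁).prod 0))) x :=
      fun x => (hslice y x).sub (hslice 0 x)
    have hzero : ∀ x : E₁, fderiv ℝ χ x = 0 := by
      intro x
      rw [(hχ x).fderiv]
      ext u
      simp only [ContinuousLinearMap.sub_apply, ContinuousLinearMap.coe_comp',
        Function.comp_apply, ContinuousLinearMap.prod_apply, ContinuousLinearMap.zero_apply,
        ContinuousLinearMap.coe_id', id_eq, sub_eq_zero]
      exact key1 x y u
    have := is_const_of_fderiv_eq_zero (fun x => (hχ x).differentiableAt) hzero x 0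
    have h0 : F (x, y) - F (x, 0) = F (0, y) - F (0, 0) := this
    linarith
  refine ⟨fun x => lam (x, 0), fun y => lam (0, y) / lam (0, 0), ?_, ?_, ?_, ?_, ?_⟩
  · exact hsm.comp (contDiff_id.prodMk contDiff_const)
  · exact (hsm.comp (contDiff_const.prodMk contDiff_id)).div_const _
  · exact fun x => hpos _
  · exact fun y => div_pos (hpos _) (hpos _)
  · intro x y
    have e1 : lam (x, y) = Real.exp (F (x, y)) := (Real.exp_log (hpos _)).symm
    rw [e1, key2 x y, Real.exp_add, Real.exp_sub, Real.exp_log (hpos _),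
      Real.exp_log (hpos _), Real.exp_log (hpos _)]

lemma aux_closed' (lam : E₁ × E₂ → ℝ) (f : E₁ → ℝ) (h : E₂ → ℝ)
    (hf : ContDiff ℝ (⊤ : ℕ∞) f) (hh : ContDiff ℝ (⊤ : ℕ∞) h)
    (hfpos : ∀ x, 0 < f x) (hhpos : ∀ y, 0 < h y)
    (heq : ∀ x y, lam (x, y) = f x * h y)
    (p : E₁ × E₂) (u : E₁) (v : E₂) :
    fderiv ℝ (fun q => fderiv ℝ (fun r => Real.log (lam r)) q (u, 0)) p (0, v) = 0 := by
  have hlf : ContDiff ℝ (⊤ : ℕ∞) (fun x => Real.log (f x)) := hf.log fun x => (hfpos x).ne'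
  have hlh : ContDiff ℝ (⊤ : ℕ∞) (fun y => Real.log (h y)) := hh.log fun y => (hhpos y).ne'
  have hFeq : (fun r : E₁ × E₂ => Real.log (lam r)) =
      fun r : E₁ × E₂ => Real.log (f r.1) + Real.log (h r.2) := by
    funext r
    rw [show lam r = f r.1 * h r.2 from heq r.1 r.2,
      Real.log_mul (hfpos _).ne' (hhpos _).ne']
  have hinner : ∀ q : E₁ × E₂,
      fderiv ℝ (fun r : E₁ × E₂ => Real.log (lam r)) q (u, 0) =
      fderiv ℝ (fun x => Real.log (f x)) q.1 u := by
    intro q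
    rw [hFeq]
    have h1 : HasFDerivAt (fun r : E₁ × E₂ => Real.log (f r.1))
        ((fderiv ℝ (fun x => Real.log (f x)) q.1).comp (ContinuousLinearMap.fst ℝ E₁ E₂)) q :=
      ((hlf.differentiable (by simp) q.1).hasFDerivAt).comp q (hasFDerivAt_fst)
    have h2 : HasFDerivAt (fun r : E₁ × E₂ => Real.log (h r.2))
        ((fderiv ℝ (fun y => Real.log (h y)) q.2).comp (ContinuousLinearMap.snd ℝ E₁ E₂)) q :=
      ((hlh.differentiable (by simp) q.2).hasFDerivAt).comp q (hasFDerivAt_snd)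
    rw [(h1.fun_add h2).fderiv]
    simp
  have hrw : (fun q : E₁ × E₂ => fderiv ℝ (fun r : E₁ × E₂ => Real.log (lam r)) q (u, 0)) =
      (fun x : E₁ => fderiv ℝ (fun x => Real.log (f x)) x u) ∘ Prod.fst := by
    funext q; exact hinner q
  rw [hrw]
  have hG : Differentiable ℝ (fun x : E₁ => fderiv ℝ (fun x => Real.log (f x)) x u) :=
    ((ContinuousLinearMap.apply ℝ ℝ u).contDiff.comp (hlf.fderiv_right (m := (⊤ : ℕ∞)) (by simp))).differentiable
      (by simp)
  rw [fderiv_comp p (hG p.1) (differentiable_fst p)]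
  simp [fderiv_fst]
end


/-!  Concrete model: the two factors of the doubly twisted product
`M₁ ×_{(λ₁,λ₂)} M₂` are modelled by real normed spaces `E₁`, `E₂` (charts of
the manifolds), so that vector fields lifted from the first (resp. second)
factor act as directional derivatives in directions `(u,0)` (resp. `(0,v)`).

The mean curvature vector field of the first canonical foliation is
`N₁ = P₂(−∇ ln λ₁)`; its metrically equivalent one-form is
`ω₁(w) = −d(ln λ₁)(0, w₂)`, and `dω₁ = 0` is equivalent to the vanishing of
the mixed derivatives `X(V(ln λ₁))` (the components of `dω₁` on two lifted
fields of the same factor vanish automatically).  Similarly for `N₂`. -/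

/-- A doubly twisted product is (up to conformal change of
`g₁`, `g₂`) a doubly warped product iff the mean curvature fields
`N₁ = P₂(−∇ln λ₁)` and `N₂ = P₁(−∇ln λ₂)` are closed; equivalently, `N₁` and
`N₂` are closed iff `λ₁(x,y) = f₁(x)h₁(y)` and `λ₂(x,y) = f₂(x)h₂(y)`. -/
theorem doublyTwisted_isWarped_iff_meanCurvature_closed
    {E₁ E₂ : Type*} [NormedAddCommGroup E₁] [NormedSpace ℝ E₁]
    [NormedAddCommGroup E₂] [NormedSpace ℝ E₂]
    (lam₁ lam₂ : E₁ × E₂ → ℝ)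
    (hsm₁ : ContDiff ℝ (⊤ : ℕ∞) lam₁) (hsm₂ : ContDiff ℝ (⊤ : ℕ∞) lam₂)
    (hpos₁ : ∀ q, 0 < lam₁ q) (hpos₂ : ∀ q, 0 < lam₂ q) :
    -- `N₁` and `N₂` are closed vector fields (their one-forms are closed) ...
    ((∀ (p : E₁ × E₂) (u : E₁) (v : E₂),
        fderiv ℝ (fun q => fderiv ℝ (fun r => Real.log (lam₁ r)) q (0, v)) p (u, 0) = 0) ∧
     (∀ (p : E₁ × E₂) (u : E₁) (v : E₂),
        fderiv ℝ (fun q => fderiv ℝ (fun r => Real.log (lam₂ r)) q (u, 0)) p (0, v) = 0))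
    ↔
    -- ... iff the twisting functions factor through the two variables.
    ((∃ (f₁ : E₁ → ℝ) (h₁ : E₂ → ℝ), ContDiff ℝ (⊤ : ℕ∞) f₁ ∧ ContDiff ℝ (⊤ : ℕ∞) h₁ ∧
        (∀ x, 0 < f₁ x) ∧ (∀ y, 0 < h₁ y) ∧
        ∀ x y, lam₁ (x, y) = f₁ x * h₁ y) ∧
     (∃ (f₂ : E₁ → ℝ) (h₂ : E₂ → ℝ), ContDiff ℝ (⊤ : ℕ∞) f₂ ∧ ContDiff ℝ (⊤ : ℕ∞) h₂ ∧
        (∀ x, 0 < f₂ x) ∧ (∀ y, 0 < h₂ y) ∧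
        ∀ x y, lam₂ (x, y) = f₂ x * h₂ y)) := by
  constructor
  · rintro ⟨h1, h2⟩
    exact ⟨aux_factor lam₁ hsm₁ hpos₁ h1, aux_factor' lam₂ hsm₂ hpos₂ h2⟩
  · rintro ⟨⟨f₁, h₁, hf₁, hh₁, hf₁p, hh₁p, he₁⟩, ⟨f₂, h₂, hf₂, hh₂, hf₂p, hh₂p, he₂⟩⟩
    exact ⟨fun p u v => aux_closed lam₁ f₁ h₁ hf₁ hh₁ hf₁p hh₁p he₁ p u v,
           fun p u v => aux_closed' lam₂ f₂ h₂ hf₂ hh₂ hf₂p hh₂p he₂ p u v⟩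
end

section
/- Let λ₁ : M₁ × M₂ → ℝ⁺ be a smooth function such that the one-form ω₁ metrically equivalent to N₁ = P₂(−∇ln λ₁) is closed. Then for every vector field X on M₁ and V on M₂ (lifted to the product), X(V(ln λ₁)) = 0, and consequently λ₁ splits as λ₁(x,y) = f₁(x)h₁(y) for smooth positive functions f₁ on M₁ and h₁ on M₂ (assuming M₁ and M₂ are connected). -/
/-!  Concrete model: the factors `M₁`, `M₂` are modelled by real normed
spaces `E₁`, `E₂` (connected, being vector spaces).  A vector field `X` lifted
from `M₁` acts as the directional derivative in a direction `(u,0)`, and a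
lifted field `V` from `M₂` in a direction `(0,v)`.  The one-form `ω₁`
metrically equivalent to `N₁ = P₂(−∇ ln λ₁)` is
`ω₁_p(w) = −d(ln λ₁)_p(0, w₂)`, and the key computational fact is
`dω₁(X,V) = −X(V(ln λ₁))`. -/

/-- If the one-form `ω₁` equivalent to `N₁ = P₂(−∇ln λ₁)` is
closed, then `X(V(ln λ₁)) = 0` for all lifted fields `X` on `M₁`, `V` on
`M₂`, and consequently `λ₁(x,y) = f₁(x)h₁(y)` with `f₁`, `h₁` smooth and
positive. -/
theorem closed_meanCurvature_form_splits_lambda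
    {E₁ E₂ : Type*} [NormedAddCommGroup E₁] [NormedSpace ℝ E₁]
    [NormedAddCommGroup E₂] [NormedSpace ℝ E₂]
    (lam₁ : E₁ × E₂ → ℝ)
    (hsm : ContDiff ℝ (⊤ : ℕ∞) lam₁) (hpos : ∀ q, 0 < lam₁ q)
    -- the one-form `ω₁` metrically equivalent to `N₁ = P₂(−∇ ln λ₁)`
    (ω₁ : E₁ × E₂ → E₁ × E₂ → ℝ)
    (hω₁ : ∀ p w, ω₁ p w =
      -(fderiv ℝ (fun q => Real.log (lam₁ q)) p (0, w.2)))
    -- `ω₁` is closed: `dω₁ = 0`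
    (hclosed : ∀ (p : E₁ × E₂) (w₁ w₂ : E₁ × E₂),
      fderiv ℝ (fun q => ω₁ q w₂) p w₁ = fderiv ℝ (fun q => ω₁ q w₁) p w₂) :
    -- `X(V(ln λ₁)) = 0` for all lifted fields ...
    (∀ (p : E₁ × E₂) (u : E₁) (v : E₂),
      fderiv ℝ (fun q => fderiv ℝ (fun r => Real.log (lam₁ r)) q (0, v)) p (u, 0) = 0) ∧
    -- ... and consequently `λ₁` splits:
    (∃ (f₁ : E₁ → ℝ) (h₁ : E₂ → ℝ), ContDiff ℝ (⊤ : ℕ∞) f₁ ∧ ContDiff ℝ (⊤ : ℕ∞) h₁ ∧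
      (∀ x, 0 < f₁ x) ∧ (∀ y, 0 < h₁ y) ∧
      ∀ x y, lam₁ (x, y) = f₁ x * h₁ y) := by
  set L : E₁ × E₂ → ℝ := fun q => Real.log (lam₁ q) with hLdef
  have hL : ContDiff ℝ (⊤ : ℕ∞) L := hsm.log (fun q => (hpos q).ne')
  have hDL : Differentiable ℝ L := hL.differentiable (by simp)
  -- Part 1: the mixed derivative vanishes
  have part1 : ∀ (p : E₁ × E₂) (u : E₁) (v : E₂),
      fderiv ℝ (fun q => fderiv ℝ L q (0, v)) p (u, 0) = 0 := by
    intro p u v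
    have h := hclosed p ((u, 0) : E₁ × E₂) ((0, v) : E₁ × E₂)
    have e1 : (fun q => ω₁ q ((0, v) : E₁ × E₂)) =
        fun q => -(fderiv ℝ L q (0, v)) := by
      funext q; rw [hω₁]
    have e2 : (fun q => ω₁ q ((u, 0) : E₁ × E₂)) = fun _ => (0 : ℝ) := by
      funext q; rw [hω₁]
      simp [Prod.mk.injEq, Prod.mk_zero_zero]
    rw [e1, e2] at h
    simp only [fderiv_fun_neg, fderiv_fun_const, Pi.zero_apply,
      ContinuousLinearMap.neg_apply, ContinuousLinearMap.zero_apply,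
      neg_eq_zero] at h
    exact h
  -- `q ↦ dL_q(0,v)` is differentiable
  have hD : ∀ v : E₂, Differentiable ℝ (fun q : E₁ × E₂ => fderiv ℝ L q (0, v)) := by
    intro v
    have h1 : ContDiff ℝ (⊤ : ℕ∞) (fderiv ℝ L) := hL.fderiv_right (by simp)
    exact ((ContinuousLinearMap.apply ℝ ℝ ((0, v) : E₁ × E₂)).contDiff.comp
      h1).differentiable (by simp)
  -- constancy along the first factor of the second partial derivative
  have hconst : ∀ (x : E₁) (y : E₂) (v : E₂),
      fderiv ℝ L (x, y) (0, v) = fderiv ℝ L (0, y) (0, v) := by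
    intro x y v
    have hg : ∀ x' : E₁, HasFDerivAt (fun x'' : E₁ => fderiv ℝ L (x'', y) (0, v))
        (0 : E₁ →L[ℝ] ℝ) x' := by
      intro x'
      have h1 := ((hD v) (x', y)).hasFDerivAt.comp x' (hasFDerivAt_prodMk_left (𝕜 := ℝ) x' y)
      refine h1.congr_fderiv (Eq.symm ?_)
      ext u
      simp only [ContinuousLinearMap.comp_apply, ContinuousLinearMap.inl_apply,
        ContinuousLinearMap.zero_apply]
      exact (part1 (x', y) u v).symm
    exact is_const_of_fderiv_eq_zero (𝕜 := ℝ)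
      (fun x' => (hg x').differentiableAt) (fun x' => (hg x').fderiv) x 0
  -- hence `L(x,y) - L(0,y)` is constant in `y`
  have key : ∀ (x : E₁) (y : E₂), L (x, y) - L (0, y) = L (x, 0) - L (0, 0) := by
    intro x y
    have hg : ∀ y' : E₂, HasFDerivAt (fun y'' : E₂ => L (x, y'') - L (0, y''))
        (0 : E₂ →L[ℝ] ℝ) y' := by
      intro y'
      have h1 := (hDL (x, y')).hasFDerivAt.comp y' (hasFDerivAt_prodMk_right (𝕜 := ℝ) x y')
      have h2 := (hDL ((0 : E₁), y')).hasFDerivAt.comp y'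
        (hasFDerivAt_prodMk_right (𝕜 := ℝ) (0 : E₁) y')
      have h3 := h1.sub h2
      refine h3.congr_fderiv (Eq.symm ?_)
      ext v
      simp only [ContinuousLinearMap.sub_apply, ContinuousLinearMap.comp_apply,
        ContinuousLinearMap.inr_apply, ContinuousLinearMap.zero_apply]
      rw [hconst x y' v, sub_self]
    exact is_const_of_fderiv_eq_zero (𝕜 := ℝ)
      (fun y' => (hg y').differentiableAt) (fun y' => (hg y').fderiv) y 0
  refine ⟨part1, fun x => lam₁ (x, 0), fun y => lam₁ (0, y) / lam₁ (0, 0),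
    hsm.comp (contDiff_id.prodMk contDiff_const),
    (hsm.comp (contDiff_const.prodMk contDiff_id)).div_const _,
    fun x => hpos _, fun y => div_pos (hpos _) (hpos _), ?_⟩
  intro x y
  have h1 : L (x, y) = L (x, 0) + L (0, y) - L (0, 0) := by
    have := key x y; linarith
  have hexp : ∀ q : E₁ × E₂, lam₁ q = Real.exp (L q) := fun q =>
    (Real.exp_log (hpos q)).symm
  show lam₁ (x, y) = lam₁ (x, 0) * (lam₁ (0, y) / lam₁ (0, 0))
  rw [hexp (x, y), hexp (x, 0), hexp (0, y), hexp (0, 0), h1]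
  rw [show L (x, 0) + L (0, y) - L (0, 0) = L (x, 0) + (L (0, y) - L (0, 0)) by ring,
    Real.exp_add, Real.exp_sub]
end

section
/- Let M = F₁ × … × F_k be a complete semi-Riemannian direct product with canonical foliations F_i. Suppose S is a nondegenerate distribution invariant by parallel translation (hence a foliation) such that F_i(p) ∩ S(p) = {0} for all i and some point p. Then parallel translation along any loop in M fixes every vector of S(x) for every x; consequently the leaves of S are flat and decomposable (they split as products of lines and circles). -/
/-!
A generator `g` of the holonomy coming from the factor `F i` moves every vector only inside
`F i`, since it fixes the other factors and preserves `F i`; so `g v - v ∈ F i`. For `v ∈ S`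
the difference also lies in `S`, by invariance, and `S ⊓ F i = 0` forces `g v = v`. Thus every
generator, hence all of the holonomy group, fixes `S` pointwise.
-/

open Submodule

section

variable {R W ι : Type*} [Ring R] [AddCommGroup W] [Module R W]

theorem map_sub_one_iSup_le_of_fixes_others (F : ι → Submodule R W) (i : ι) (f : W →ₗ[R] W)
    (hfix : ∀ j, j ≠ i → ∀ v ∈ F j, f v = v) (hmaps : ∀ v ∈ F i, f v ∈ F i) :
    (⨆ j, F j).map (f - 1) ≤ F i := by
  rw [Submodule.map_iSup]
  refine iSup_le fun j => map_le_iff_le_comap.2 fun v hv => ?_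
  by_cases hji : j = i
  · subst hji
    exact sub_mem (hmaps v hv) hv
  · simp [hfix j hji v hv]

theorem eq_of_sub_mem_of_inf_eq_bot {S T : Submodule R W} (hST : S ⊓ T = ⊥) {v w : W}
    (hv : v ∈ S) (hw : w ∈ S) (hwv : w - v ∈ T) : w = v := by
  have hmem : w - v ∈ S ⊓ T := ⟨sub_mem hw hv, hwv⟩
  rwa [hST, mem_bot, sub_eq_zero] at hmem

theorem mem_fixingSubgroup_of_sub_mem_of_inf_eq_bot {S T : Submodule R W} (hST : S ⊓ T = ⊥)
    (g : W ≃ₗ[R] W) (hS : S.map g.toLinearMap = S) (hT : ∀ v, g v - v ∈ T) :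
    g ∈ fixingSubgroup (W ≃ₗ[R] W) (S : Set W) := by
  refine (mem_fixingSubgroup_iff _).2 fun v hv => ?_
  have hgv : g v ∈ S := hS ▸ mem_map_of_mem hv
  exact eq_of_sub_mem_of_inf_eq_bot hST hv hgv (hT v)

end

/-- A nondegenerate parallel distribution `S` on a complete
direct product meeting every canonical foliation trivially is fixed
vectorwise by all parallel translations along loops. -/
theorem parallel_distribution_trivial_holonomy
    {W : Type*} [AddCommGroup W] [Module ℝ W]
    {k : ℕ} (F : Fin k → Submodule ℝ W)
    (hinternal : DirectSum.IsInternal F)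
    (Hol : Subgroup (W ≃ₗ[ℝ] W))
    (Gen : Fin k → Set (W ≃ₗ[ℝ] W))
    -- the holonomy of the direct product is generated by factor holonomies
    (hGen : Hol = Subgroup.closure (⋃ i, Gen i))
    (hGenFix : ∀ i, ∀ h ∈ Gen i,
      (∀ j, j ≠ i → ∀ v ∈ F j, h v = v) ∧ (∀ v ∈ F i, h v ∈ F i))
    (S : Submodule ℝ W)
    -- `S` is invariant by parallel translation
    (hSinv : ∀ h ∈ Hol, S.map (h : W ≃ₗ[ℝ] W).toLinearMap = S)
    -- `S` meets each canonical foliation trivially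
    (hmeet : ∀ i, S ⊓ F i = ⊥) :
    ∀ h ∈ Hol, ∀ v ∈ S, h v = v := by
  have hgen_le : (⋃ i, Gen i) ⊆ fixingSubgroup (W ≃ₗ[ℝ] W) (S : Set W) := by
    intro g hg
    obtain ⟨i, hgi⟩ := Set.mem_iUnion.1 hg
    have hgHol : g ∈ Hol := hGen ▸ Subgroup.subset_closure hg
    have hmove : (⨆ j, F j).map (g.toLinearMap - 1) ≤ F i :=
      map_sub_one_iSup_le_of_fixes_others F i g.toLinearMap
        (hGenFix i g hgi).1 (hGenFix i g hgi).2
    refine mem_fixingSubgroup_of_sub_mem_of_inf_eq_bot (hmeet i) g (hSinv g hgHol) fun v => ?_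
    have hv : v ∈ ⨆ j, F j := hinternal.submodule_iSup_eq_top ▸ mem_top
    exact hmove (mem_map_of_mem hv)
  intro h hh v hv
  rw [hGen] at hh
  exact (mem_fixingSubgroup_iff _).1 (Subgroup.closure_le _ |>.2 hgen_le hh) v hv
end
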